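/- Strong-convexity gain of the gossip step: let f : ℝ^d → ℝ be μ_f-strongly convex (μ_f ≥ 0) and let W ∈ ℝ^{K×K} be symmetric doubly stochastic with nonnegative entries and β := max{|λ_2(W)|, |λ_K(W)|}. Then for any v_1,…,v_K ∈ ℝ^d with average v̄ := (1/K)Σ_k v_k, (1/K) Σ_{k=1}^K ( f(v_k) − f(Σ_{l=1}^K W_{kl} v_l) ) ≥ (μ_f/(2K)) (1 − β²) Σ_{k=1}^K ‖v_k − v̄‖². -/

import Mathlib

/-!
Write `f = g + (μ/2)‖·‖²` with `g` convex. Jensen's inequality along the rows of the doubly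
stochastic `W` gives `∑ₖ g((Wv)ₖ) ≤ ∑ₖ g(vₖ)`, so it remains to bound
`∑ₖ ‖vₖ‖² - ∑ₖ ‖(Wv)ₖ‖²`. As `W` preserves `∑ₖ vₖ`, this equals the same difference of sums
centred at `v̄`, and the centred mixed vectors are `W - 𝟙𝟙ᵀ/K` applied to the centred `vₖ`,
which contracts the sum of squares by `β²` in each coordinate.
-/

open Finset

theorem ConvexOn.sum_map_sum_smul_le {ι E : Type*} [Fintype ι] [AddCommGroup E] [Module ℝ E]
    {g : E → ℝ} (hg : ConvexOn ℝ Set.univ g) {W : Matrix ι ι ℝ}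
    (hW : ∀ k l, 0 ≤ W k l) (hrow : ∀ k, ∑ l, W k l = 1) (hcol : ∀ l, ∑ k, W k l = 1)
    (v : ι → E) :
    ∑ k, g (∑ l, W k l • v l) ≤ ∑ k, g (v k) :=
  calc ∑ k, g (∑ l, W k l • v l)
      ≤ ∑ k, ∑ l, W k l * g (v l) :=
        sum_le_sum fun k _ => hg.map_sum_le (fun l _ => hW k l) (hrow k) fun _ _ => trivial
    _ = ∑ l, g (v l) := by
        rw [sum_comm]
        simp only [← sum_mul, hcol, one_mul]

theorem sum_sum_smul_eq_sum_of_sum_col_eq_one {ι E : Type*} [Fintype ι] [AddCommGroup E]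
    [Module ℝ E] {W : Matrix ι ι ℝ} (hcol : ∀ l, ∑ k, W k l = 1) (v : ι → E) :
    ∑ k, ∑ l, W k l • v l = ∑ l, v l := by
  rw [sum_comm]
  simp only [← sum_smul, hcol, one_smul]

theorem sum_sum_smul_sub_mean_of_sum_row_eq_one {ι E : Type*} [Fintype ι] [AddCommGroup E]
    [Module ℝ E] {W : Matrix ι ι ℝ} {k : ι} (hrow : ∑ l, W k l = 1) (v : ι → E) :
    ∑ l, W k l • v l - (Fintype.card ι : ℝ)⁻¹ • ∑ l, v l
      = ∑ l, (W k l - (Fintype.card ι : ℝ)⁻¹) •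
          (v l - (Fintype.card ι : ℝ)⁻¹ • ∑ l, v l) := by
  have : Nonempty ι := ⟨k⟩
  set a := (Fintype.card ι : ℝ)⁻¹
  set vbar := a • ∑ l, v l
  have hcentered : ∑ l, (W k l - a) = 0 := by
    rw [sum_sub_distrib, hrow, sum_const, card_univ, nsmul_eq_mul,
      mul_inv_cancel₀ (Nat.cast_ne_zero.mpr Fintype.card_ne_zero), sub_self]
  have hterm (l : ι) :
      (W k l - a) • (v l - vbar) = (W k l • v l - a • v l) - (W k l - a) • vbar := by
    rw [smul_sub, sub_smul]
  rw [sum_congr rfl fun l _ => hterm l, sum_sub_distrib, sum_sub_distrib, ← sum_smul, hcentered,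
    zero_smul, sub_zero, ← smul_sum]

theorem EuclideanSpace.sum_norm_sq_sum_smul_le {ι n : Type*} [Fintype ι] [Fintype n]
    {A : Matrix ι ι ℝ} {c : ℝ}
    (hA : ∀ z : ι → ℝ, ∑ k, (∑ l, A k l * z l) ^ 2 ≤ c * ∑ k, z k ^ 2)
    (x : ι → EuclideanSpace ℝ n) :
    ∑ k, ‖∑ l, A k l • x l‖ ^ 2 ≤ c * ∑ k, ‖x k‖ ^ 2 := by
  simp only [EuclideanSpace.real_norm_sq_eq, WithLp.ofLp_sum, Finset.sum_apply, PiLp.smul_apply,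
    smul_eq_mul]
  rw [sum_comm, sum_comm (s := univ (α := ι)), mul_sum]
  exact sum_le_sum fun i _ => hA fun l => x l i

section InnerProductSpace

variable {ι F : Type*} [Fintype ι] [NormedAddCommGroup F] [InnerProductSpace ℝ F]

theorem sum_norm_sub_sq (x : ι → F) (c : F) :
    ∑ k, ‖x k - c‖ ^ 2
      = ∑ k, ‖x k‖ ^ 2 - 2 * inner ℝ (∑ k, x k) c + Fintype.card ι * ‖c‖ ^ 2 := by
  simp only [norm_sub_sq_real, sum_add_distrib, sum_sub_distrib, ← mul_sum, sum_inner,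
    sum_const, card_univ, nsmul_eq_mul]

theorem sum_norm_sub_sq_sub_sum_norm_sub_sq_of_sum_eq {x y : ι → F} (h : ∑ k, x k = ∑ k, y k)
    (c : F) :
    ∑ k, ‖x k - c‖ ^ 2 - ∑ k, ‖y k - c‖ ^ 2 = ∑ k, ‖x k‖ ^ 2 - ∑ k, ‖y k‖ ^ 2 := by
  rw [sum_norm_sub_sq, sum_norm_sub_sq, h]
  ring

theorem le_sum_sub_map_sum_smul_of_strongConvex {f : F → ℝ} {μ : ℝ}
    (hf : ConvexOn ℝ Set.univ fun z => f z - μ / 2 * ‖z‖ ^ 2) {W : Matrix ι ι ℝ}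
    (hW : ∀ k l, 0 ≤ W k l) (hrow : ∀ k, ∑ l, W k l = 1) (hcol : ∀ l, ∑ k, W k l = 1)
    (v : ι → F) (c : F) :
    μ / 2 * (∑ k, ‖v k - c‖ ^ 2 - ∑ k, ‖∑ l, W k l • v l - c‖ ^ 2)
      ≤ ∑ k, (f (v k) - f (∑ l, W k l • v l)) := by
  have hjensen := hf.sum_map_sum_smul_le hW hrow hcol v
  rw [sum_norm_sub_sq_sub_sum_norm_sub_sq_of_sum_eq
    (sum_sum_smul_eq_sum_of_sum_col_eq_one hcol v).symm]
  simp only [sum_sub_distrib, mul_sub, mul_sum] at hjensen ⊢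
  linarith

end InnerProductSpace

theorem gossip_strong_convexity_gain_general
    {d K : ℕ} (μ : ℝ) (hμ : 0 ≤ μ)
    (W : Matrix (Fin K) (Fin K) ℝ)
    (hWnonneg : ∀ k l, 0 ≤ W k l)
    (hWrow : ∀ k, ∑ l, W k l = 1) (hWcol : ∀ l, ∑ k, W k l = 1)
    (β : ℝ)
    (hβ : ∀ z : Fin K → ℝ,
      ∑ k, (∑ l, (W k l - (K : ℝ)⁻¹) * z l) ^ 2 ≤ β ^ 2 * ∑ k, z k ^ 2)
    (f : EuclideanSpace ℝ (Fin d) → ℝ)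
    (hstrong : ConvexOn ℝ Set.univ fun z => f z - μ / 2 * ‖z‖ ^ 2)
    (v : Fin K → EuclideanSpace ℝ (Fin d)) :
    μ / (2 * K) * (1 - β ^ 2) * ∑ k, ‖v k - (K : ℝ)⁻¹ • ∑ l, v l‖ ^ 2
      ≤ (K : ℝ)⁻¹ * ∑ k, (f (v k) - f (∑ l, W k l • v l)) := by
  set vbar := (K : ℝ)⁻¹ • ∑ l, v l
  have hcontract : ∑ k, ‖∑ l, W k l • v l - vbar‖ ^ 2 ≤ β ^ 2 * ∑ k, ‖v k - vbar‖ ^ 2 := by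
    have hcentred (k : Fin K) :
        ∑ l, W k l • v l - vbar = ∑ l, (W k l - (K : ℝ)⁻¹) • (v l - vbar) := by
      simpa only [Fintype.card_fin] using sum_sum_smul_sub_mean_of_sum_row_eq_one (hWrow k) v
    simpa only [hcentred] using EuclideanSpace.sum_norm_sq_sum_smul_le hβ fun l => v l - vbar
  have hgain := le_sum_sub_map_sum_smul_of_strongConvex hstrong hWnonneg hWrow hWcol v vbar
  calc μ / (2 * K) * (1 - β ^ 2) * ∑ k, ‖v k - vbar‖ ^ 2
      = (K : ℝ)⁻¹ * (μ / 2 * (∑ k, ‖v k - vbar‖ ^ 2 - β ^ 2 * ∑ k, ‖v k - vbar‖ ^ 2)) := by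
        ring
    _ ≤ (K : ℝ)⁻¹ * ∑ k, (f (v k) - f (∑ l, W k l • v l)) := by
        gcongr
        exact le_trans (by gcongr) hgain

/-- Strong-convexity gain of the gossip step: let `f` be `μ_f`-strongly
convex (`μ_f ≥ 0`) and `W` symmetric doubly stochastic with nonnegative entries and
second-largest eigenvalue magnitude `β` (characterized by the spectral contraction
property of `W − (1/K)𝟙𝟙ᵀ`).  Then for any `v_1, …, v_K` with average `v̄`,
`(1/K) ∑_k (f(v_k) − f(∑_l W_{kl} v_l)) ≥ (μ_f/(2K)) (1 − β²) ∑_k ‖v_k − v̄‖²`. -/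
theorem gossip_strong_convexity_gain
    {d K : ℕ} (hK : 0 < K) (μ : ℝ) (hμ : 0 ≤ μ)
    (W : Matrix (Fin K) (Fin K) ℝ)
    (hWnonneg : ∀ k l, 0 ≤ W k l) (hWsymm : ∀ k l, W k l = W l k)
    (hWrow : ∀ k, ∑ l, W k l = 1) (hWcol : ∀ l, ∑ k, W k l = 1)
    (β : ℝ) (hβ0 : 0 ≤ β)
    (hβ : ∀ z : Fin K → ℝ,
      ∑ k, (∑ l, (W k l - (K : ℝ)⁻¹) * z l) ^ 2 ≤ β ^ 2 * ∑ k, z k ^ 2)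
    (f : EuclideanSpace ℝ (Fin d) → ℝ)
    (hstrong : ConvexOn ℝ Set.univ fun z => f z - μ / 2 * ‖z‖ ^ 2)
    (v : Fin K → EuclideanSpace ℝ (Fin d)) :
    μ / (2 * K) * (1 - β ^ 2) * ∑ k, ‖v k - (K : ℝ)⁻¹ • ∑ l, v l‖ ^ 2
      ≤ (K : ℝ)⁻¹ * ∑ k, (f (v k) - f (∑ l, W k l • v l)) :=
  gossip_strong_convexity_gain_general μ hμ W hWnonneg hWrow hWcol β hβ f hstrong v
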